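/- Let (Ω, 𝓕, P) be a probability space, 𝓐 and 𝓒 sub-σ-algebras, and f ∈ L² bounded by 1, with the Markov property E[f | 𝓐] = E[f | 𝓒] holding almost surely. Then for any g ∈ L² measurable with respect to 𝓐 with |g| ≤ 1: |Cov(f,g)| ≤ ‖E[f | 𝓒] - E[f]‖₂. -/

import Mathlib

/-!
Pulling the `𝓐`-measurable `g` out of `E[· | 𝓐]` and then using the Markov property gives
`Cov(f, g) = E[g (E[f | 𝓒] - E f)]`. Since `|g| ≤ 1` this is at most
`E |E[f | 𝓒] - E f|`, which is bounded by the `L²` norm because `(E |X|)² ≤ E X²`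
(nonnegativity of the variance of `|X|`).
-/

open MeasureTheory ProbabilityTheory

section

variable {Ω : Type*} {m mΩ : MeasurableSpace Ω} {μ : Measure Ω}

lemma integral_mul_eq_integral_mul_condExp [IsFiniteMeasure μ] (hm : m ≤ mΩ) {f g : Ω → ℝ}
    (hg : StronglyMeasurable[m] g) (hgf : Integrable (g * f) μ) (hf : Integrable f μ) :
    ∫ ω, g ω * f ω ∂μ = ∫ ω, g ω * μ[f|m] ω ∂μ :=
  (integral_condExp hm).symm.trans
    (integral_congr_ae (condExp_mul_of_stronglyMeasurable_left hg hgf hf))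

lemma sq_integral_le_integral_sq [IsProbabilityMeasure μ] {X : Ω → ℝ} (hX : MemLp X 2 μ) :
    (∫ ω, X ω ∂μ) ^ 2 ≤ ∫ ω, X ω ^ 2 ∂μ := by
  have h := variance_nonneg X μ
  rw [variance_eq_sub hX] at h
  exact sub_nonneg.mp h

lemma integral_abs_le_sqrt_integral_sq [IsProbabilityMeasure μ] {X : Ω → ℝ} (hX : MemLp X 2 μ) :
    ∫ ω, |X ω| ∂μ ≤ √(∫ ω, X ω ^ 2 ∂μ) := by
  refine Real.le_sqrt_of_sq_le ?_
  simpa only [sq_abs] using sq_integral_le_integral_sq (X := fun ω ↦ |X ω|) hX.abs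

lemma abs_integral_mul_le_sqrt_integral_sq [IsProbabilityMeasure μ] {g X : Ω → ℝ}
    (hbg : ∀ᵐ ω ∂μ, |g ω| ≤ 1) (hX : MemLp X 2 μ) :
    |∫ ω, g ω * X ω ∂μ| ≤ √(∫ ω, X ω ^ 2 ∂μ) := by
  calc |∫ ω, g ω * X ω ∂μ| ≤ ∫ ω, |g ω * X ω| ∂μ := abs_integral_le_integral_abs
    _ ≤ ∫ ω, |X ω| ∂μ := by
      refine integral_mono_of_nonneg (.of_forall fun _ ↦ abs_nonneg _)
        (hX.integrable one_le_two).abs ?_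
      filter_upwards [hbg] with ω hω
      rw [abs_mul]
      exact mul_le_of_le_one_left (abs_nonneg _) hω
    _ ≤ √(∫ ω, X ω ^ 2 ∂μ) := integral_abs_le_sqrt_integral_sq hX

end

theorem cov_le_L2_condexp_dist_markov_general {Ω : Type*} {mΩ : MeasurableSpace Ω}
    (μ : Measure Ω) [IsProbabilityMeasure μ]
    (𝓐 𝓒 : MeasurableSpace Ω) (h𝓐 : 𝓐 ≤ mΩ)
    (f g : Ω → ℝ)
    (hf : MemLp f 2 μ)
    (hgmeas : StronglyMeasurable[𝓐] g)
    (hbg : ∀ᵐ ω ∂μ, |g ω| ≤ 1)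
    (hMarkov : (μ[f|𝓐]) =ᵐ[μ] (μ[f|𝓒])) :
    |(∫ ω, f ω * g ω ∂μ) - (∫ ω, f ω ∂μ) * (∫ ω, g ω ∂μ)| ≤
      Real.sqrt (∫ ω, ((μ[f|𝓒]) ω - ∫ ω', f ω' ∂μ) ^ 2 ∂μ) := by
  set c := ∫ ω, f ω ∂μ
  have hg_norm : ∀ᵐ ω ∂μ, ‖g ω‖ ≤ 1 := hbg
  have hg_meas : AEStronglyMeasurable[mΩ] g μ := (hgmeas.mono h𝓐).aestronglyMeasurable
  have hf_int : Integrable f μ := hf.integrable one_le_two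
  have hcov : (∫ ω, f ω * g ω ∂μ) - c * ∫ ω, g ω ∂μ = ∫ ω, g ω * (μ[f|𝓒] ω - c) ∂μ := by
    have hg_int : Integrable g μ := .of_bound hg_meas 1 hg_norm
    calc (∫ ω, f ω * g ω ∂μ) - c * ∫ ω, g ω ∂μ
        = (∫ ω, g ω * μ[f|𝓐] ω ∂μ) - ∫ ω, g ω * c ∂μ := by
          simp_rw [mul_comm (f _), integral_mul_const, mul_comm c]
          rw [integral_mul_eq_integral_mul_condExp h𝓐 hgmeas
            (hf_int.bdd_mul hg_meas hg_norm) hf_int]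
      _ = (∫ ω, g ω * μ[f|𝓒] ω ∂μ) - ∫ ω, g ω * c ∂μ := by
          congr 1
          exact integral_congr_ae ((Filter.EventuallyEq.refl _ g).mul hMarkov)
      _ = ∫ ω, g ω * (μ[f|𝓒] ω - c) ∂μ := by
          simp_rw [mul_sub]
          exact (integral_sub (integrable_condExp.bdd_mul hg_meas hg_norm)
            (hg_int.mul_const c)).symm
  rw [hcov]
  exact abs_integral_mul_le_sqrt_integral_sq hbg ((hf.condExp one_le_two).sub (memLp_const c))

/-- covariance bound via a Markov property. If `E[f|𝓐] = E[f|𝓒]`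
a.s. and `g` is `𝓐`-measurable, both bounded by 1, then
`|Cov(f,g)| ≤ ‖E[f|𝓒] - E[f]‖₂`. -/
theorem cov_le_L2_condexp_dist_markov {Ω : Type*} {mΩ : MeasurableSpace Ω}
    (μ : Measure Ω) [IsProbabilityMeasure μ]
    (𝓐 𝓒 : MeasurableSpace Ω) (h𝓐 : 𝓐 ≤ mΩ) (h𝓒 : 𝓒 ≤ mΩ)
    (f g : Ω → ℝ)
    (hf : MemLp f 2 μ) (hg : MemLp g 2 μ)
    (hgmeas : StronglyMeasurable[𝓐] g)
    (hbf : ∀ᵐ ω ∂μ, |f ω| ≤ 1) (hbg : ∀ᵐ ω ∂μ, |g ω| ≤ 1)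
    (hMarkov : (μ[f|𝓐]) =ᵐ[μ] (μ[f|𝓒])) :
    |(∫ ω, f ω * g ω ∂μ) - (∫ ω, f ω ∂μ) * (∫ ω, g ω ∂μ)| ≤
      Real.sqrt (∫ ω, ((μ[f|𝓒]) ω - ∫ ω', f ω' ∂μ) ^ 2 ∂μ) :=
  cov_le_L2_condexp_dist_markov_general μ 𝓐 𝓒 h𝓐 f g hf hgmeas hbg hMarkov
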